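/- Let q be odd and let U be an intersecting family of polynomials over F_q of degree at most 2 with |U| > (q^2 + 2q − 1)/2. Suppose H ⊆ U has more than (q^2 + q)/2 elements and there exist α, β ∈ F_q such that h(α) = β for every h ∈ H. Then f(α) = β for every polynomial f ∈ U. -/

import Mathlib

open Finset Polynomial

/-!
Suppose some `f ∈ U` misses `(α, β)`. For `h ∈ H`, the quadratic `h - f` takes the value
`c = β - f(α) ≠ 0` at `α` and has a root because `h` and `f` meet. Expanded around
`α` it reads `a X² + b X + c`, and `h ↦ (a, b)` is injective on `H`. If `a X² + b X + c` has a
root `x`, then `x ≠ 0` and `(a, b) = (c t u, -c (t + u))` with `t = x⁻¹`, `u = a x / c`. This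
expression is symmetric in `t, u` and never equals `(0, 0)`, its value at `{0, 0}`, so fewer than
`|Sym² F| = (q² + q) / 2` pairs `(a, b)` occur, contradicting `|H| > (q² + q) / 2`.
-/

lemma eval_eq_of_natDegree_le_two {R : Type*} [CommRing R] {p : R[X]} (hp : p.natDegree ≤ 2)
    (x : R) : p.eval x = p.coeff 2 * x ^ 2 + p.coeff 1 * x + p.coeff 0 := by
  rw [eval_eq_sum_range' (Nat.lt_succ_of_le hp)]
  simp only [sum_range_succ, sum_range_zero, zero_add, pow_zero, pow_one, mul_one]
  ring

lemma eq_of_coeff_eq_of_natDegree_le_two {R : Type*} [Semiring R] {p q : R[X]}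
    (hp : p.natDegree ≤ 2) (hq : q.natDegree ≤ 2) (h0 : p.coeff 0 = q.coeff 0)
    (h1 : p.coeff 1 = q.coeff 1) (h2 : p.coeff 2 = q.coeff 2) : p = q := by
  ext (_ | _ | _ | n)
  · exact h0
  · exact h1
  · exact h2
  · rw [coeff_eq_zero_of_natDegree_lt (by omega), coeff_eq_zero_of_natDegree_lt (by omega)]

lemma two_mul_card_sym2 (α : Type*) [Fintype α] :
    2 * Fintype.card (Sym2 α) = Fintype.card α ^ 2 + Fintype.card α := by
  have := Nat.choose_succ_right_eq (Fintype.card α + 1) 1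
  rw [Sym2.card]
  simp only [Nat.choose_one_right, Nat.add_sub_cancel] at this
  linarith

def rootedQuadratics {R : Type*} [CommRing R] [Fintype R] [DecidableEq R] (c : R) :
    Finset (R × R) :=
  univ.filter fun ab => ∃ x, ab.1 * x ^ 2 + ab.2 * x + c = 0

section Vieta

variable {F : Type*} [Field F]

def vietaCoeffs (c : F) : Sym2 F → F × F :=
  Sym2.lift ⟨fun t u => (c * t * u, -c * (t + u)), fun t u => by
    simp only [mul_right_comm c t u, add_comm t u]⟩

variable [Fintype F] [DecidableEq F]

lemma mem_range_vietaCoeffs {c a b : F} (hc : c ≠ 0) (hab : (a, b) ∈ rootedQuadratics c) :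
    (a, b) ∈ Set.range (vietaCoeffs c) := by
  obtain ⟨x, hx⟩ := (mem_filter.1 hab).2
  have hx0 : x ≠ 0 := by rintro rfl; simp [hc] at hx
  refine ⟨s(x⁻¹, a * x / c), ?_⟩
  simp only [vietaCoeffs, Sym2.lift_mk, Prod.mk.injEq]
  constructor
  · field_simp
  · field_simp
    linear_combination -hx

lemma card_rootedQuadratics_lt {c : F} (hc : c ≠ 0) :
    #(rootedQuadratics c) < Fintype.card (Sym2 F) := by
  have hzero : (0, 0) ∉ rootedQuadratics c := by simp [rootedQuadratics, hc]
  calc #(rootedQuadratics c) < #(univ.image (vietaCoeffs c)) := by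
        refine card_lt_card ⟨fun ab hab => ?_, fun h => hzero (h ?_)⟩
        · obtain ⟨s, hs⟩ := mem_range_vietaCoeffs hc hab
          exact mem_image.2 ⟨s, mem_univ _, hs⟩
        · exact mem_image.2 ⟨s(0, 0), mem_univ _, by simp [vietaCoeffs]⟩
    _ ≤ Fintype.card (Sym2 F) := card_image_le

end Vieta

section Taylor

variable {R : Type*} [CommRing R]

noncomputable def taylorQuadCoeffs (α : R) (g : R[X]) : R × R :=
  ((taylor α g).coeff 2, (taylor α g).coeff 1)

lemma taylorQuadCoeffs_mem_rootedQuadratics [Fintype R] [DecidableEq R] {α x : R} {g : R[X]}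
    (hg : g.natDegree ≤ 2) (hx : g.eval x = 0) :
    taylorQuadCoeffs α g ∈ rootedQuadratics (g.eval α) := by
  refine mem_filter.2 ⟨mem_univ _, x - α, ?_⟩
  have := eval_eq_of_natDegree_le_two ((natDegree_taylor g α).trans_le hg) (x - α)
  rwa [taylor_eval, sub_add_cancel, hx, taylor_coeff_zero, eq_comm] at this

lemma injOn_taylorQuadCoeffs (α c : R) :
    Set.InjOn (taylorQuadCoeffs α) {g | g.natDegree ≤ 2 ∧ g.eval α = c} := by
  rintro g ⟨hg, hgα⟩ g' ⟨hg', hg'α⟩ h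
  obtain ⟨h2, h1⟩ := Prod.ext_iff.1 h
  refine taylor_injective α (eq_of_coeff_eq_of_natDegree_le_two ?_ ?_ ?_ h1 h2)
  · exact (natDegree_taylor g α).trans_le hg
  · exact (natDegree_taylor g' α).trans_le hg'
  · rw [taylor_coeff_zero, taylor_coeff_zero, hgα, hg'α]

lemma card_le_card_rootedQuadratics [Fintype R] [DecidableEq R] {α c : R} {G : Finset R[X]}
    (hdeg : ∀ g ∈ G, g.natDegree ≤ 2) (hval : ∀ g ∈ G, g.eval α = c)
    (hroot : ∀ g ∈ G, ∃ x, g.eval x = 0) : #G ≤ #(rootedQuadratics c) := by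
  have hinj : Set.InjOn (taylorQuadCoeffs α) G := fun g hg g' hg' =>
    injOn_taylorQuadCoeffs α c ⟨hdeg g hg, hval g hg⟩ ⟨hdeg g' hg', hval g' hg'⟩
  refine card_le_card_of_injOn (taylorQuadCoeffs α) (fun g hg => ?_) hinj
  obtain ⟨x, hx⟩ := hroot g hg
  exact hval g hg ▸ taylorQuadCoeffs_mem_rootedQuadratics (hdeg g hg) hx

end Taylor

theorem stmt8_general (F : Type*) [Field F] [Fintype F]
    (U : Finset (Polynomial F)) (hdeg : ∀ f ∈ U, f.natDegree ≤ 2)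
    (hint : ∀ f ∈ U, ∀ g ∈ U, ∃ x : F, f.eval x = g.eval x)
    (H : Finset (Polynomial F)) (hHU : H ⊆ U)
    (hH : Fintype.card F ^ 2 + Fintype.card F < 2 * H.card)
    (α β : F) (hαβ : ∀ h ∈ H, h.eval α = β) :
    ∀ f ∈ U, f.eval α = β := by
  classical
  intro f hf
  by_contra hne
  have hc : β - f.eval α ≠ 0 := sub_ne_zero.2 (Ne.symm hne)
  have hcard : #(H.image (· - f)) ≤ #(rootedQuadratics (β - f.eval α)) := by
    refine card_le_card_rootedQuadratics (α := α) ?_ ?_ ?_ <;>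
      simp only [mem_image, forall_exists_index, and_imp, forall_apply_eq_imp_iff₂]
    · exact fun h hh => (natDegree_sub_le h f).trans (max_le (hdeg h (hHU hh)) (hdeg f hf))
    · exact fun h hh => by rw [eval_sub, hαβ h hh]
    · exact fun h hh => (hint h (hHU hh) f hf).imp fun x hx => by rw [eval_sub, hx, sub_self]
  rw [card_image_of_injective _ sub_left_injective] at hcard
  have := card_rootedQuadratics_lt hc
  have := two_mul_card_sym2 F
  omega

/-- Let `q` be odd and `U` an intersecting family of polynomials over `F_q` of degree at
most `2` with `|U| > (q^2 + 2q − 1)/2`. If a subfamily `H ⊆ U` with `|H| > (q^2 + q)/2`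
passes through a common point `(α, β)`, then every `f ∈ U` satisfies `f(α) = β`. -/
theorem stmt8 (F : Type*) [Field F] [Fintype F] (hq : Odd (Fintype.card F))
    (U : Finset (Polynomial F)) (hdeg : ∀ f ∈ U, f.natDegree ≤ 2)
    (hint : ∀ f ∈ U, ∀ g ∈ U, ∃ x : F, f.eval x = g.eval x)
    (hU : Fintype.card F ^ 2 + 2 * Fintype.card F - 1 < 2 * U.card)
    (H : Finset (Polynomial F)) (hHU : H ⊆ U)
    (hH : Fintype.card F ^ 2 + Fintype.card F < 2 * H.card)
    (α β : F) (hαβ : ∀ h ∈ H, h.eval α = β) :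
    ∀ f ∈ U, f.eval α = β :=
  stmt8_general F U hdeg hint H hHU hH α β hαβ
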